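/- arXiv:1309.5082 — 2 statements merged into one kernel-verified Lean document; each statement's English description precedes it below -/
import Mathlib

section
/- Let R = k[x_0,…,x_n] be a polynomial ring over a field k and let I ⊆ R be a monomial ideal. For each associated prime P of I, set Q_{⊆P} = R ∩ I R_P (the contraction of the extension of I to the localization R_P). Then for every positive integer m, the m-th symbolic power of I is I^{(m)} = ⋂_{P ∈ maxAss(I)} Q_{⊆P}^m. -/
open MvPolynomial Pointwise

noncomputable section

/-- The contraction to `R` of the extension of `I ^ m` to the localization of `R` at the
prime ideal `P`, i.e. `R ∩ I^m R_P`. -/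
def contractedPower {R : Type*} [CommRing R] (I : Ideal R) (m : ℕ)
    (P : Ideal R) (hP : P.IsPrime) : Ideal R :=
  letI := hP
  (Ideal.map (algebraMap R (Localization.AtPrime P)) (I ^ m)).comap
    (algebraMap R (Localization.AtPrime P))

/-- `Q_{⊆ P} = R ∩ I R_P`, the contraction to `R` of the extension of `I` to `R_P`. -/
def Qsub {R : Type*} [CommRing R] (I P : Ideal R) (hP : P.IsPrime) : Ideal R :=
  letI := hP
  (Ideal.map (algebraMap R (Localization.AtPrime P)) I).comap
    (algebraMap R (Localization.AtPrime P))

/-- The `m`-th symbolic power `I^{(m)} = ⋂_{P ∈ Ass(I)} (R ∩ I^m R_P)`. -/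
def symbolicPower {R : Type*} [CommRing R] (I : Ideal R) (m : ℕ) : Ideal R :=
  ⨅ P : {P : Ideal R // P ∈ associatedPrimes R (R ⧸ I)},
    contractedPower I m P.1 P.2.isPrime

/-- The set of associated primes of `I` that are maximal with respect to inclusion. -/
def maxAss {R : Type*} [CommRing R] (I : Ideal R) : Set (Ideal R) :=
  {P | P ∈ associatedPrimes R (R ⧸ I) ∧
    ∀ P' ∈ associatedPrimes R (R ⧸ I), P ≤ P' → P = P'}

/-- A monomial ideal: an ideal generated by monomials. -/
def IsMonomialIdeal {k : Type*} [Field k] {n : ℕ}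
    (I : Ideal (MvPolynomial (Fin (n + 1)) k)) : Prop :=
  ∃ S : Set (Fin (n + 1) →₀ ℕ),
    I = Ideal.span ((fun a => (monomial a (1 : k) : MvPolynomial (Fin (n + 1)) k)) '' S)

/-- A square-free monomial ideal: an ideal generated by square-free monomials. -/
def IsSquarefreeMonomialIdeal {k : Type*} [Field k] {n : ℕ}
    (I : Ideal (MvPolynomial (Fin (n + 1)) k)) : Prop :=
  ∃ S : Set (Fin (n + 1) →₀ ℕ), (∀ a ∈ S, ∀ i, a i ≤ 1) ∧
    I = Ideal.span ((fun a => (monomial a (1 : k) : MvPolynomial (Fin (n + 1)) k)) '' S)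

/-- The height of a prime ideal. -/
def primeHeight {R : Type*} [CommRing R] (P : Ideal R) (hP : P.IsPrime) : ℕ∞ :=
  Order.height (⟨P, hP⟩ : PrimeSpectrum R)

/-- `e` is the big-height of `I`: the maximum of the heights of the associated primes of `I`. -/
def IsBigHeight {R : Type*} [CommRing R] (I : Ideal R) (e : ℕ) : Prop :=
  (∀ P, ∀ h : P ∈ associatedPrimes R (R ⧸ I), primeHeight P h.isPrime ≤ (e : ℕ∞)) ∧
    ∃ P, ∃ h : P ∈ associatedPrimes R (R ⧸ I), primeHeight P h.isPrime = (e : ℕ∞)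

/-- The irrelevant maximal ideal `𝔪 = (x_0, …, x_n)`. -/
def mId (k : Type*) [Field k] (n : ℕ) : Ideal (MvPolynomial (Fin (n + 1)) k) :=
  Ideal.span (Set.range X)

/-- The exponent vector of a monomial, viewed as a point of `ℝ^{n+1}`. -/
def expVec {n : ℕ} (a : Fin (n + 1) →₀ ℕ) : Fin (n + 1) → ℝ := fun i => (a i : ℝ)

/-- `L(J)`: the set of exponent vectors of the monomials lying in `J`. -/
def latticePoints {k : Type*} [Field k] {n : ℕ}
    (J : Ideal (MvPolynomial (Fin (n + 1)) k)) : Set (Fin (n + 1) → ℝ) :=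
  {v | ∃ a : Fin (n + 1) →₀ ℕ, monomial a (1 : k) ∈ J ∧ v = expVec a}

/-- The exponent vectors of the minimal monomial generators of a monomial ideal. -/
def minGens {k : Type*} [Field k] {n : ℕ}
    (J : Ideal (MvPolynomial (Fin (n + 1)) k)) : Set (Fin (n + 1) →₀ ℕ) :=
  {a | monomial a (1 : k) ∈ J ∧
    ∀ b : Fin (n + 1) →₀ ℕ, monomial b (1 : k) ∈ J → b ≤ a → b = a}

/-- The symbolic polyhedron `𝒬 = ⋂_{P ∈ maxAss(I)} conv(L(Q_{⊆P}))`. -/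
def symbolicPolyhedron {k : Type*} [Field k] {n : ℕ}
    (I : Ideal (MvPolynomial (Fin (n + 1)) k)) : Set (Fin (n + 1) → ℝ) :=
  ⋂ P : {P : Ideal (MvPolynomial (Fin (n + 1)) k) // P ∈ maxAss I},
    convexHull ℝ (latticePoints (Qsub I P.1 P.2.1.isPrime))

/-- `α(J)`: the least degree of a nonzero (homogeneous) element of `J`. -/
def alphaI {k : Type*} [Field k] {n : ℕ}
    (J : Ideal (MvPolynomial (Fin (n + 1)) k)) : ℕ :=
  sInf {d | ∃ f ∈ J, f ≠ 0 ∧ MvPolynomial.IsHomogeneous f d}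

/-- `β(J)`: the largest degree of a minimal generator of the monomial ideal `J`. -/
def betaI {k : Type*} [Field k] {n : ℕ}
    (J : Ideal (MvPolynomial (Fin (n + 1)) k)) : ℕ :=
  sSup {d | ∃ a ∈ minGens J, ∑ i, a i = d}

/-- `α(𝒫) = inf { a_0 + ⋯ + a_n : a ∈ 𝒫 }` for a subset `𝒫 ⊆ ℝ^{n+1}`. -/
def alphaSet {n : ℕ} (P : Set (Fin (n + 1) → ℝ)) : ℝ :=
  sInf ((fun v => ∑ i, v i) '' P)

/-- The set of all conical (nonnegative) combinations of elements of `S`. -/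
def conicalHull {E : Type*} [AddCommMonoid E] [Module ℝ E] (S : Set E) : Set E :=
  {x | ∃ (t : Finset E) (c : E → ℝ), ↑t ⊆ S ∧ (∀ y, 0 ≤ c y) ∧ x = ∑ y ∈ t, c y • y}

/-- The staircase of a monomial ideal `J`. -/
def stairs {k : Type*} [Field k] {n : ℕ}
    (J : Ideal (MvPolynomial (Fin (n + 1)) k)) : Set (Fin (n + 1) → ℝ) :=
  {v | (∀ i, 0 ≤ v i) ∧
    ∃ a : Fin (n + 1) →₀ ℕ, monomial a (1 : k) ∈ J ∧ ∀ i, (a i : ℝ) ≤ v i}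

end

/-!
Localizing at a prime `P` inverts the variables outside `P`, so for an ideal `J` generated by
monomials, `R ∩ J R_P` is the image of `J` under the substitution of `1` for those variables.
The point is that an ideal generated by monomials in the variables of `P` is saturated with
respect to every `s ∉ P`: some term of `s` avoids these variables, and comparing leading terms
of `s * x` for an order that ranks such terms highest shows that each term of `x` is divisible by
a generator. As the substitution is a ring map, it commutes with powers, which gives
`R ∩ I^m R_P = (R ∩ I R_P)^m` for a monomial ideal `I`. Finally `R ∩ J R_P` shrinks as `P` grows,
so only the maximal associated primes matter in the intersection defining `I^{(m)}`.
-/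

theorem UniqueAdd.of_isMaxOn {M Γ : Type*} [AddCommMonoid M] [IsLeftCancelAdd M]
    [AddCommMonoid Γ] [LinearOrder Γ] [IsOrderedCancelAddMonoid Γ]
    (f : M → Γ) (hf : Function.Injective f) (hadd : ∀ a b, f (a + b) = f a + f b)
    {A B : Finset M} {a₀ b₀ : M} (ha₀ : ∀ a ∈ A, f a ≤ f a₀) (hb₀ : ∀ b ∈ B, f b ≤ f b₀) :
    UniqueAdd A B a₀ b₀ := by
  intro a b ha hb hab
  have hsum : f a + f b = f a₀ + f b₀ := by rw [← hadd, ← hadd, hab]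
  obtain rfl : a = a₀ := hf <| (ha₀ a ha).eq_of_not_lt fun hlt =>
    (add_lt_add_of_lt_of_le hlt (hb₀ b hb)).ne hsum
  exact ⟨rfl, add_left_cancel hab⟩

section Contraction

variable {R : Type*} [CommRing R]

theorem mem_Qsub_iff {I P : Ideal R} (hP : P.IsPrime) {x : R} :
    x ∈ Qsub I P hP ↔ ∃ s ∉ P, s * x ∈ I :=
  IsLocalization.algebraMap_mem_map_algebraMap_iff P.primeCompl (Localization.AtPrime P) I x

theorem contractedPower_eq_Qsub (I P : Ideal R) (hP : P.IsPrime) (m : ℕ) :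
    contractedPower I m P hP = Qsub (I ^ m) P hP :=
  rfl

theorem Qsub_anti (I : Ideal R) {P P' : Ideal R} (hP : P.IsPrime) (hP' : P'.IsPrime)
    (h : P ≤ P') : Qsub I P' hP' ≤ Qsub I P hP := fun _ hx => by
  obtain ⟨s, hs, hsx⟩ := (mem_Qsub_iff hP').mp hx
  exact (mem_Qsub_iff hP).mpr ⟨s, fun hsP => hs (h hsP), hsx⟩

theorem exists_mem_maxAss_le [IsNoetherianRing R] {I P : Ideal R}
    (hP : P ∈ associatedPrimes R (R ⧸ I)) : ∃ P' ∈ maxAss I, P ≤ P' := by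
  obtain ⟨P', hPP', hmax⟩ := (associatedPrimes.finite R (R ⧸ I)).exists_le_maximal hP
  exact ⟨P', ⟨hmax.prop, fun Q hQ hle => le_antisymm hle (hmax.2 hQ hle)⟩, hPP'⟩

theorem symbolicPower_eq_iInf_maxAss [IsNoetherianRing R] (I : Ideal R) (m : ℕ) :
    symbolicPower I m =
      ⨅ P : {P : Ideal R // P ∈ maxAss I}, contractedPower I m P.1 P.2.1.isPrime := by
  refine le_antisymm (le_iInf fun P => iInf_le_of_le ⟨P.1, P.2.1⟩ le_rfl) (le_iInf fun P => ?_)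
  obtain ⟨P', hP', hPP'⟩ := exists_mem_maxAss_le P.2
  exact iInf_le_of_le ⟨P', hP'⟩ (Qsub_anti _ P.2.isPrime hP'.1.isPrime hPP')

end Contraction

namespace MvPolynomial

variable {σ R : Type*}

section Substitution

variable [CommRing R]

noncomputable def evalOneOutside (A : Set σ) [DecidablePred (· ∈ A)] :
    MvPolynomial σ R →ₐ[R] MvPolynomial σ R :=
  aeval fun i => if i ∈ A then X i else 1

theorem evalOneOutside_monomial (A : Set σ) [DecidablePred (· ∈ A)]
    (a : σ →₀ ℕ) : evalOneOutside A (monomial a (1 : R)) = monomial (a.filter (· ∈ A)) 1 := by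
  rw [evalOneOutside, aeval_monomial, map_one, one_mul, Finsupp.prod, ← prod_X_pow_eq_monomial,
    Finsupp.support_filter, Finset.prod_filter]
  refine Finset.prod_congr rfl fun i _ => ?_
  split_ifs with hi <;> simp [hi]

theorem monomial_one_notMem_of_isPrime {P : Ideal (MvPolynomial σ R)} [P.IsPrime]
    {a : σ →₀ ℕ} (ha : ∀ i ∈ a.support, X i ∉ P) : monomial a (1 : R) ∉ P := by
  rw [← prod_X_pow_eq_monomial, Ideal.IsPrime.prod_mem_iff]
  rintro ⟨i, hi, hXi⟩
  exact ha i hi ((‹P.IsPrime›.pow_mem_iff_mem _ (Nat.pos_of_ne_zero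
    (Finsupp.mem_support_iff.mp hi))).mp hXi)

theorem monomial_mul_one_one (a b : σ →₀ ℕ) :
    monomial a (1 : R) * monomial b 1 = monomial (a + b) 1 := by
  rw [monomial_mul, one_mul]

theorem span_monomial_pow (S : Set (σ →₀ ℕ)) (m : ℕ) :
    Ideal.span ((monomial · (1 : R)) '' S) ^ m = Ideal.span ((monomial · (1 : R)) '' (m • S)) := by
  induction m with
  | zero => simp
  | succ m ih =>
    rw [pow_succ, ih, Ideal.span_mul_span', succ_nsmul, ← Set.image2_add, ← Set.image2_mul]
    exact congrArg Ideal.span (Set.image_image2_distrib (g := (monomial · (1 : R)))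
      (f := (· + ·)) fun a b => (monomial_mul_one_one a b).symm).symm

theorem map_evalOneOutside_span_monomial (A : Set σ) [DecidablePred (· ∈ A)]
    (S : Set (σ →₀ ℕ)) :
    (Ideal.span ((monomial · (1 : R)) '' S)).map (evalOneOutside A) =
      Ideal.span ((monomial · (1 : R)) '' ((fun a => a.filter (· ∈ A)) '' S)) := by
  rw [Ideal.map_span, Set.image_image, Set.image_image]
  simp only [evalOneOutside_monomial]

end Substitution

section RestrictLexKey

variable (A : Set σ) [DecidablePred (· ∈ A)]

def restrictLexKey (a : σ →₀ ℕ) : (Lex (σ →₀ ℕ))ᵒᵈ ×ₗ Lex (σ →₀ ℕ) :=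
  toLex (OrderDual.toDual (toLex (a.filter (· ∈ A))), toLex a)

theorem restrictLexKey_add (a b : σ →₀ ℕ) :
    restrictLexKey A (a + b) = restrictLexKey A a + restrictLexKey A b := by
  simp only [restrictLexKey, Finsupp.filter_add]; rfl

theorem restrictLexKey_injective : Function.Injective (restrictLexKey A) :=
  fun a b h => by simpa [restrictLexKey] using congrArg (fun z => (ofLex z).2) h

theorem filter_eq_zero_of_restrictLexKey_le [LinearOrder σ] {a b : σ →₀ ℕ}
    (ha : a.filter (· ∈ A) = 0) (h : restrictLexKey A a ≤ restrictLexKey A b) :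
    b.filter (· ∈ A) = 0 := by
  have h' := Prod.Lex.monotone_fst _ _ h
  simp only [restrictLexKey, ofLex_toLex, ha, OrderDual.toDual_le_toDual] at h'
  exact toLex_inj.mp (le_bot_iff.mp h')

end RestrictLexKey

section LinearOrder

variable [LinearOrder σ] [CommSemiring R] [NoZeroDivisors R] {A : Set σ} [DecidablePred (· ∈ A)]

theorem exists_le_of_mul_mem_span_monomial {T : Set (σ →₀ ℕ)} (hT : ∀ a ∈ T, ∀ i ∉ A, a i = 0)
    {s y : MvPolynomial σ R} (hsy : s * y ∈ Ideal.span ((monomial · 1) '' T)) {b c : σ →₀ ℕ}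
    (hb : b ∈ s.support) (hbA : ∀ i ∈ A, b i = 0)
    (hbmax : ∀ b' ∈ s.support, restrictLexKey A b' ≤ restrictLexKey A b)
    (hc : c ∈ y.support) (hcmax : ∀ c' ∈ y.support, restrictLexKey A c' ≤ restrictLexKey A c) :
    ∃ a ∈ T, a ≤ c := by
  have hbc : b + c ∈ (s * y).support := by
    have hprod : coeff (b + c) (s * y) = coeff b s * coeff c y :=
      AddMonoidAlgebra.coeff_mul_add_of_uniqueAdd <|
        UniqueAdd.of_isMaxOn _ (restrictLexKey_injective A) (restrictLexKey_add A) hbmax hcmax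
    rw [mem_support_iff, hprod]
    exact mul_ne_zero (mem_support_iff.mp hb) (mem_support_iff.mp hc)
  obtain ⟨a, haT, hab⟩ := mem_ideal_span_monomial_image.mp hsy _ hbc
  refine ⟨a, haT, fun i => ?_⟩
  by_cases hi : i ∈ A
  · simpa [hbA i hi] using hab i
  · simp [hT a haT i hi]

end LinearOrder

open Classical in
theorem exists_sub_mem_span_monomial [CommRing R] (x : MvPolynomial σ R) (T : Set (σ →₀ ℕ)) :
    ∃ y : MvPolynomial σ R, x - y ∈ Ideal.span ((monomial · 1) '' T) ∧
      y.support = x.support.filter fun d => ∀ a ∈ T, ¬a ≤ d := by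
  set bad := x.support.filter fun d => ∀ a ∈ T, ¬a ≤ d
  set y := ∑ d ∈ bad, monomial d (coeff d x)
  have hcoeff (d : σ →₀ ℕ) : coeff d y = if d ∈ bad then coeff d x else 0 := by
    simp [y, coeff_sum, coeff_monomial]
  refine ⟨y, ?_, ?_⟩
  · rw [mem_ideal_span_monomial_image]
    intro d hd
    rw [mem_support_iff, coeff_sub, hcoeff] at hd
    by_cases hdbad : d ∈ bad
    · simp [hdbad] at hd
    · simp only [hdbad, if_false, sub_zero] at hd
      simpa [bad, mem_support_iff.mpr hd] using hdbad
  · ext d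
    rw [mem_support_iff, hcoeff]
    by_cases hdbad : d ∈ bad
    · simpa [hdbad] using (Finset.mem_filter.mp hdbad).1
    · simp [hdbad]

theorem mem_span_monomial_of_mul_mem [CommRing R] [NoZeroDivisors R] {A : Set σ}
    {T : Set (σ →₀ ℕ)} (hT : ∀ a ∈ T, ∀ i ∉ A, a i = 0) {s x : MvPolynomial σ R}
    (hs : s ∉ Ideal.span (X '' A)) (hsx : s * x ∈ Ideal.span ((monomial · 1) '' T)) :
    x ∈ Ideal.span ((monomial · (1 : R)) '' T) := by
  classical
  let : LinearOrder σ := WellOrderingRel.isWellOrder.linearOrder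
  obtain ⟨b₀, hb₀, hb₀A⟩ : ∃ b ∈ s.support, ∀ i ∈ A, b i = 0 := by
    simpa [mem_ideal_span_X_image] using hs
  obtain ⟨b, hb, hbmax⟩ := s.support.exists_max_image (restrictLexKey A) ⟨b₀, hb₀⟩
  have hbA : ∀ i ∈ A, b i = 0 := (Finsupp.filter_eq_zero_iff _ _).mp <|
    filter_eq_zero_of_restrictLexKey_le A ((Finsupp.filter_eq_zero_iff _ _).mpr hb₀A) (hbmax b₀ hb₀)
  obtain ⟨y, hxy, hy⟩ := exists_sub_mem_span_monomial x T
  suffices y = 0 by simpa [this] using hxy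
  by_contra hy0
  obtain ⟨c, hc, hcmax⟩ := y.support.exists_max_image (restrictLexKey A) (support_nonempty.mpr hy0)
  have hsy : s * y ∈ Ideal.span ((monomial · (1 : R)) '' T) := by
    simpa [mul_sub] using Ideal.sub_mem _ hsx (Ideal.mul_mem_left _ s hxy)
  obtain ⟨a, haT, hac⟩ := exists_le_of_mul_mem_span_monomial hT hsy hb hbA hbmax hc hcmax
  rw [hy] at hc
  exact (Finset.mem_filter.mp hc).2 a haT hac

end MvPolynomial

section Monomial

open MvPolynomial

variable {σ R : Type*} [CommRing R]

open Classical in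
theorem Qsub_span_monomial [NoZeroDivisors R] (S : Set (σ →₀ ℕ))
    {P : Ideal (MvPolynomial σ R)} (hP : P.IsPrime) :
    Qsub (Ideal.span ((monomial · (1 : R)) '' S)) P hP =
      (Ideal.span ((monomial · (1 : R)) '' S)).map (evalOneOutside {i | X i ∈ P}) := by
  set A := {i | X (R := R) i ∈ P}
  rw [map_evalOneOutside_span_monomial]
  apply le_antisymm
  · intro x hx
    obtain ⟨s, hsP, hsx⟩ := (mem_Qsub_iff hP).mp hx
    refine mem_span_monomial_of_mul_mem (A := A) (s := s) ?_ ?_ ?_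
    · rintro _ ⟨a, -, rfl⟩ i hi
      exact Finsupp.filter_apply_neg _ _ hi
    · exact fun h => hsP (Ideal.span_le.mpr (by rintro _ ⟨i, hi, rfl⟩; exact hi) h)
    · rw [mem_ideal_span_monomial_image] at hsx ⊢
      intro d hd
      obtain ⟨a, ha, had⟩ := hsx d hd
      exact ⟨_, ⟨a, ha, rfl⟩, (le_self_add.trans_eq (Finsupp.filter_add_filter_not a _)).trans had⟩
  · rw [Ideal.span_le]
    rintro _ ⟨_, ⟨a, ha, rfl⟩, rfl⟩
    refine (mem_Qsub_iff hP).mpr ⟨monomial (a.filter (· ∉ A)) 1,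
      monomial_one_notMem_of_isPrime fun i hi => ?_, ?_⟩
    · rw [Finsupp.support_filter, Finset.mem_filter] at hi
      exact hi.2
    · rw [monomial_mul_one_one, add_comm, Finsupp.filter_add_filter_not]
      exact Ideal.subset_span ⟨a, ha, rfl⟩

theorem contractedPower_span_monomial [NoZeroDivisors R] (S : Set (σ →₀ ℕ)) (m : ℕ)
    {P : Ideal (MvPolynomial σ R)} (hP : P.IsPrime) :
    contractedPower (Ideal.span ((monomial · (1 : R)) '' S)) m P hP =
      Qsub (Ideal.span ((monomial · (1 : R)) '' S)) P hP ^ m := by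
  rw [contractedPower_eq_Qsub, span_monomial_pow, Qsub_span_monomial, ← span_monomial_pow,
    Ideal.map_pow, Qsub_span_monomial]

end Monomial

theorem symbolic_power_eq_iInf_Qsub_pow_general {k : Type*} [Field k] {n : ℕ}
    (I : Ideal (MvPolynomial (Fin (n + 1)) k)) (hmon : IsMonomialIdeal I) (m : ℕ) :
    symbolicPower I m =
      ⨅ P : {P : Ideal (MvPolynomial (Fin (n + 1)) k) // P ∈ maxAss I},
        (Qsub I P.1 P.2.1.isPrime) ^ m := by
  obtain ⟨S, rfl⟩ := hmon
  rw [symbolicPower_eq_iInf_maxAss]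
  exact iInf_congr fun P => contractedPower_span_monomial S m _

theorem symbolic_power_eq_iInf_Qsub_pow {k : Type*} [Field k] {n : ℕ}
    (I : Ideal (MvPolynomial (Fin (n + 1)) k)) (hmon : IsMonomialIdeal I) (m : ℕ) (hm : 1 ≤ m) :
    symbolicPower I m =
      ⨅ P : {P : Ideal (MvPolynomial (Fin (n + 1)) k) // P ∈ maxAss I},
        (Qsub I P.1 P.2.1.isPrime) ^ m :=
  symbolic_power_eq_iInf_Qsub_pow_general I hmon m
end

section
/- Let R = k[x_0,…,x_n] be a polynomial ring over a field k, let 𝔪 = (x_0,…,x_n), and let I ⊆ R be a square-free monomial ideal with big-height e. Then for all positive integers m, t and r, I^{(t(m+e-1)-e+r)} ⊆ 𝔪^{(t-1)(e-1)+r-1} · (I^{(m)})^t. -/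
open MvPolynomial Pointwise

/-!
Every associated prime of a squarefree monomial ideal `I` is `P_F = (x_i : i ∈ F)` for a minimal
vertex cover `F` of the supports of its generators, of height at least `|F|`, so `|F| ≤ e`.
In the polynomial ring over a domain, the `F`-weighted order (the least `F`-degree of a monomial)
is additive on products; hence if `s ∉ P_F` and `s f ∈ I ^ N`, every monomial `x^b` of `f` has
`F`-degree at least `N`. Conversely, minimality of `F` gives `u = ∏_{j ∉ F} x_j ∉ P_F` with
`u P_F ⊆ I`, so `x^K ∈ I^{(m)}` as soon as `∑_{i ∈ F} K_i ≥ m` for every associated `F`.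

For `x^b` in `I^{(t(m+e-1)-e+r)}`, the vector `⌊b/t⌋` has `F`-degree at least `m` on every
associated face. A pointwise minimal `K ≤ ⌊b/t⌋` with this property has `F`-degree exactly `m`
on some face `F'`, so `x^b = x^(b - tK) (x^K)^t` where the first factor has degree at least
`(t(m+e-1)-e+r) - tm = (t-1)(e-1) + r - 1`.
-/

theorem Finset.le_sum_div_of_le_sum {ι : Type*} {F : Finset ι} {c : ι → ℕ} {t m e : ℕ}
    (ht : 0 < t) (hF : F.card ≤ e) (hc : t * m + (t - 1) * (e - 1) ≤ ∑ i ∈ F, c i) :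
    m ≤ ∑ i ∈ F, c i / t := by
  have hdiv : ∑ i ∈ F, c i ≤ t * ∑ i ∈ F, c i / t + F.card * (t - 1) := calc
    ∑ i ∈ F, c i ≤ ∑ i ∈ F, (t * (c i / t) + (t - 1)) := Finset.sum_le_sum fun i _ => by
        have := Nat.div_add_mod (c i) t
        have := Nat.mod_lt (c i) ht
        omega
    _ = t * ∑ i ∈ F, c i / t + F.card * (t - 1) := by
      rw [Finset.sum_add_distrib, Finset.mul_sum, Finset.sum_const, smul_eq_mul]
  have hcard : F.card * (t - 1) ≤ (t - 1) * (e - 1) + (t - 1) := by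
    rw [mul_comm, ← Nat.mul_succ]
    exact Nat.mul_le_mul_left _ (by omega)
  have : t * m < t * (∑ i ∈ F, c i / t + 1) := by
    rw [Nat.mul_succ]
    omega
  exact Nat.lt_succ_iff.mp (Nat.lt_of_mul_lt_mul_left this)

theorem Finsupp.exists_nsmul_le_forall_le_sum {ι : Type*} {𝓕 : Set (Finset ι)} {c : ι →₀ ℕ}
    {t m e : ℕ} (ht : 0 < t) (h𝓕 : 𝓕.Nonempty) (hcard : ∀ F ∈ 𝓕, F.card ≤ e)
    (hc : ∀ F ∈ 𝓕, t * m + (t - 1) * (e - 1) ≤ ∑ i ∈ F, c i) :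
    ∃ K : ι →₀ ℕ, t • K ≤ c ∧ (∀ F ∈ 𝓕, m ≤ ∑ i ∈ F, K i) ∧ ∃ F ∈ 𝓕, ∑ i ∈ F, K i ≤ m := by
  classical
  set P : (ι →₀ ℕ) → Prop := fun K => t • K ≤ c ∧ ∀ F ∈ 𝓕, m ≤ ∑ i ∈ F, K i
  have hfloor : P (c.mapRange (· / t) (Nat.zero_div t)) :=
    ⟨fun i => by simpa using Nat.mul_div_le (c i) t,
      fun F hF => by simpa using Finset.le_sum_div_of_le_sum ht (hcard F hF) (hc F hF)⟩
  obtain ⟨K, ⟨hKc, hK⟩, hmin⟩ := exists_minimal_of_wellFoundedLT P ⟨_, hfloor⟩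
  refine ⟨K, hKc, hK, ?_⟩
  obtain rfl | hK0 := eq_or_ne K 0
  · obtain ⟨F, hF⟩ := h𝓕
    exact ⟨F, hF, by simp⟩
  obtain ⟨i, hi⟩ : ∃ i, K i ≠ 0 := by simpa [Finsupp.ne_iff] using hK0
  -- by minimality, lowering `K` at `i` breaks a face constraint, which was therefore tight
  have hlow : ¬ P (K - single i 1) := fun h => by
    have := hmin h tsub_le_self i
    simp only [coe_tsub, Pi.sub_apply, single_eq_same] at this
    omega
  simp only [P, not_and, not_forall, not_le] at hlow
  obtain ⟨F, hF, hlt⟩ := hlow ((nsmul_le_nsmul_right tsub_le_self t).trans hKc)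
  have hsingle : ∑ j ∈ F, single i 1 j ≤ 1 := by
    simp only [single_apply, Finset.sum_ite_eq]
    split_ifs <;> simp
  refine ⟨F, hF, ?_⟩
  calc ∑ j ∈ F, K j ≤ ∑ j ∈ F, ((K - single i 1 : ι →₀ ℕ) j + single i 1 j) :=
        Finset.sum_le_sum fun j _ => le_tsub_add
    _ ≤ m := by
      rw [Finset.sum_add_distrib]
      omega

theorem Finsupp.sum_sub_mul_sum_le_degree {ι : Type*} [Fintype ι] {c K : ι →₀ ℕ} {t : ℕ}
    (h : t • K ≤ c) (F : Finset ι) : ∑ i ∈ F, c i - t * ∑ i ∈ F, K i ≤ (c - t • K).degree := by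
  rw [Finset.mul_sum, ← Finset.sum_tsub_distrib _ fun i _ => by simpa using h i, degree_eq_sum]
  simpa using Finset.sum_le_sum_of_subset (f := fun i => c i - t * K i) (Finset.subset_univ F)

theorem Finsupp.weight_ite_mem {σ : Type*} [DecidableEq σ] (F : Finset σ) (b : σ →₀ ℕ) :
    weight (fun i => if i ∈ F then 1 else 0) b = ∑ i ∈ F, b i := by
  simp only [weight_apply, Finsupp.sum, smul_eq_mul, mul_ite, mul_one, mul_zero,
    Finset.sum_ite_mem, Finset.inter_comm]
  exact Finset.sum_subset Finset.inter_subset_left (by simp_all)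

theorem mem_contractedPower_iff {R : Type*} [CommRing R] {I P : Ideal R} {m : ℕ} (hP : P.IsPrime)
    {f : R} : f ∈ contractedPower I m P hP ↔ ∃ s ∉ P, s * f ∈ I ^ m := by
  rw [contractedPower, Ideal.mem_comap,
    ← IsLocalization.mk'_one (M := P.primeCompl) (Localization.AtPrime P) f,
    IsLocalization.mk'_mem_map_algebraMap_iff P.primeCompl]
  rfl

theorem mem_symbolicPower_iff {R : Type*} [CommRing R] {I : Ideal R} {m : ℕ} {f : R} :
    f ∈ symbolicPower I m ↔ ∀ P ∈ associatedPrimes R (R ⧸ I), ∃ s ∉ P, s * f ∈ I ^ m := by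
  simp [symbolicPower, mem_contractedPower_iff]

theorem Ideal.le_of_mem_associatedPrimes_quotient {R : Type*} [CommRing R] {I P : Ideal R}
    (hP : P ∈ associatedPrimes R (R ⧸ I)) : I ≤ P := by
  simpa [Submodule.annihilator_top, Ideal.annihilator_quotient] using hP.annihilator_le

namespace MvPolynomial

variable {σ R : Type*}

section CommSemiring

variable [CommSemiring R]

theorem mem_of_forall_monomial_mem {J : Ideal (MvPolynomial σ R)} {f : MvPolynomial σ R}
    (h : ∀ b ∈ f.support, monomial b 1 ∈ J) : f ∈ J := by
  rw [f.as_sum]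
  exact J.sum_mem fun b hb => by
    simpa [C_mul_monomial] using J.mul_mem_left (C (coeff b f)) (h b hb)

variable (R) in
noncomputable def idealOfVarsIn (F : Finset σ) : Ideal (MvPolynomial σ R) :=
  Ideal.span (X '' F)

theorem monomial_mem_idealOfVarsIn_pow {F : Finset σ} {m : ℕ} :
    ∀ {b : σ →₀ ℕ}, m ≤ ∑ i ∈ F, b i → ∀ r : R, monomial b r ∈ idealOfVarsIn R F ^ m := by
  induction m with
  | zero => simp
  | succ m ih =>
    intro b hb r
    obtain ⟨i, hiF, hi⟩ : ∃ i ∈ F, b i ≠ 0 := by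
      by_contra! h
      simp [Finset.sum_eq_zero h] at hb
    obtain ⟨b, rfl⟩ : ∃ b', b = b' + Finsupp.single i 1 :=
      ⟨b - Finsupp.single i 1, (tsub_add_cancel_of_le (by simpa [Nat.one_le_iff_ne_zero])).symm⟩
    rw [monomial_add_single, pow_one, pow_succ]
    refine Ideal.mul_mem_mul (ih ?_ r) (Ideal.subset_span ⟨i, hiF, rfl⟩)
    classical
    simpa [Finset.sum_add_distrib, Finsupp.single_apply, hiF] using hb

theorem X_mem_idealOfVarsIn_iff [Nontrivial R] {F : Finset σ} {i : σ} :
    (X i : MvPolynomial σ R) ∈ idealOfVarsIn R F ↔ i ∈ F := by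
  classical
  simp [idealOfVarsIn, mem_ideal_span_X_image, support_X, Finsupp.single_apply]

theorem idealOfVarsIn_le_iff [Nontrivial R] {F G : Finset σ} :
    idealOfVarsIn R F ≤ idealOfVarsIn R G ↔ F ⊆ G :=
  ⟨fun h _ hi => X_mem_idealOfVarsIn_iff.mp (h (X_mem_idealOfVarsIn_iff.mpr hi)),
    fun h => Ideal.span_mono (Set.image_mono (Finset.coe_subset.mpr h))⟩

variable [DecidableEq σ]

/-- The least `F`-degree `∑ i ∈ F, b i` of a monomial `x^b` of `f` (`⊤` for `f = 0`). -/
noncomputable def orderIn (F : Finset σ) (f : MvPolynomial σ R) : ℕ∞ :=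
  (f : MvPowerSeries σ R).weightedOrder fun i => if i ∈ F then 1 else 0

theorem le_orderIn_iff {F : Finset σ} {f : MvPolynomial σ R} {d : ℕ} :
    d ≤ orderIn F f ↔ ∀ b ∈ f.support, d ≤ ∑ i ∈ F, b i := by
  simp_rw [← Finsupp.weight_ite_mem]
  refine ⟨fun h b hb => ?_, fun h => MvPowerSeries.nat_le_weightedOrder _ fun b hb => ?_⟩
  · exact_mod_cast h.trans
      (MvPowerSeries.weightedOrder_le _ (by rwa [coeff_coe, ← mem_support_iff]))
  · rw [coeff_coe, ← notMem_support_iff]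
    exact fun hmem => (h b hmem).not_gt hb

theorem mem_idealOfVarsIn_iff {F : Finset σ} {f : MvPolynomial σ R} :
    f ∈ idealOfVarsIn R F ↔ 1 ≤ orderIn F f := by
  rw [idealOfVarsIn, mem_ideal_span_X_image, ← Nat.cast_one, le_orderIn_iff]
  refine forall₂_congr fun b _ => ?_
  rw [Nat.one_le_iff_ne_zero, Ne, Finset.sum_eq_zero_iff]
  simp

theorem min_orderIn_le_add (F : Finset σ) (f g : MvPolynomial σ R) :
    min (orderIn F f) (orderIn F g) ≤ orderIn F (f + g) := by
  rw [orderIn, orderIn, orderIn, coe_add]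
  exact MvPowerSeries.min_weightedOrder_le_add _

theorem le_orderIn_mul (F : Finset σ) (f g : MvPolynomial σ R) :
    orderIn F f + orderIn F g ≤ orderIn F (f * g) := by
  rw [orderIn, orderIn, orderIn, coe_mul]
  exact MvPowerSeries.le_weightedOrder_mul _

theorem le_orderIn_of_mem_pow {F : Finset σ} {J : Ideal (MvPolynomial σ R)}
    (hJ : J ≤ idealOfVarsIn R F) {N : ℕ} {f : MvPolynomial σ R} (hf : f ∈ J ^ N) :
    N ≤ orderIn F f := by
  induction N generalizing f with
  | zero => simp
  | succ N ih =>
    rw [pow_succ] at hf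
    refine Submodule.mul_induction_on hf (fun x hx y hy => ?_) fun x y hx hy => ?_
    · calc ((N + 1 : ℕ) : ℕ∞) = N + 1 := by push_cast; rfl
        _ ≤ orderIn F x + orderIn F y :=
          add_le_add (ih hx) (by exact_mod_cast mem_idealOfVarsIn_iff.mp (hJ hy))
        _ ≤ orderIn F (x * y) := le_orderIn_mul F x y
    · exact (le_min hx hy).trans (min_orderIn_le_add F x y)

end CommSemiring

section Domain

variable [CommRing R]

variable (R) in
def associatedFaces (I : Ideal (MvPolynomial σ R)) : Set (Finset σ) :=
  {F | idealOfVarsIn R F ∈ associatedPrimes _ (MvPolynomial σ R ⧸ I)}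

variable [IsDomain R] [DecidableEq σ]

theorem orderIn_mul (F : Finset σ) (f g : MvPolynomial σ R) :
    orderIn F (f * g) = orderIn F f + orderIn F g := by
  rw [orderIn, orderIn, orderIn, coe_mul]
  exact MvPowerSeries.weightedOrder_mul _ _ _

theorem isPrime_idealOfVarsIn (F : Finset σ) : (idealOfVarsIn R F).IsPrime := by
  refine ⟨fun h => ?_, fun {f g} h => ?_⟩
  · have := mem_idealOfVarsIn_iff.mp ((Ideal.eq_top_iff_one _).mp h)
    simp [orderIn, MvPowerSeries.weightedOrder_one] at this
  · simp_rw [mem_idealOfVarsIn_iff, orderIn_mul] at h ⊢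
    simpa [Order.one_le_iff_ne_zero, or_iff_not_imp_left] using h

theorem le_sum_of_mul_mem_pow {F : Finset σ} {J : Ideal (MvPolynomial σ R)}
    (hJ : J ≤ idealOfVarsIn R F) {s f : MvPolynomial σ R} (hs : s ∉ idealOfVarsIn R F) {N : ℕ}
    (h : s * f ∈ J ^ N) : ∀ b ∈ f.support, N ≤ ∑ i ∈ F, b i := by
  have hs0 : orderIn F s = 0 := by
    simpa [mem_idealOfVarsIn_iff, Order.one_le_iff_ne_zero] using hs
  rw [← le_orderIn_iff]
  simpa [orderIn_mul, hs0] using le_orderIn_of_mem_pow hJ h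

theorem card_le_height_idealOfVarsIn (F : Finset σ) :
    (F.card : ℕ∞) ≤ Order.height (⟨idealOfVarsIn R F, isPrime_idealOfVarsIn F⟩ :
      PrimeSpectrum (MvPolynomial σ R)) := by
  induction F using Finset.cons_induction with
  | empty => simp
  | cons i F hi ih =>
    have hlt : (⟨idealOfVarsIn R F, isPrime_idealOfVarsIn F⟩ : PrimeSpectrum (MvPolynomial σ R)) <
        ⟨idealOfVarsIn R (F.cons i hi), isPrime_idealOfVarsIn _⟩ := by
      rw [← PrimeSpectrum.asIdeal_lt_asIdeal, lt_iff_le_not_ge]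
      simp only [idealOfVarsIn_le_iff]
      exact ⟨Finset.subset_cons hi, fun h => hi (h (Finset.mem_cons_self i F))⟩
    rw [Finset.card_cons, Nat.cast_succ]
    exact (by gcongr : (F.card : ℕ∞) + 1 ≤ _ + 1).trans (Order.height_add_one_le hlt)

theorem le_sum_of_mem_symbolicPower {I : Ideal (MvPolynomial σ R)} {F : Finset σ}
    (hF : F ∈ associatedFaces R I) {N : ℕ}
    {f : MvPolynomial σ R} (hf : f ∈ symbolicPower I N) : ∀ b ∈ f.support, N ≤ ∑ i ∈ F, b i := by
  obtain ⟨s, hs, hsf⟩ := mem_symbolicPower_iff.mp hf _ hF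
  exact le_sum_of_mul_mem_pow (Ideal.le_of_mem_associatedPrimes_quotient hF) hs hsf

end Domain

def IsVertexCover (S : Set (σ →₀ ℕ)) (F : Finset σ) : Prop :=
  ∀ a ∈ S, ∃ i ∈ F, a i ≠ 0

section Squarefree

variable {S : Set (σ →₀ ℕ)}

theorem span_monomial_le_idealOfVarsIn [CommSemiring R] [Nontrivial R] {F : Finset σ}
    (hF : IsVertexCover S F) : Ideal.span ((monomial · (1 : R)) '' S) ≤ idealOfVarsIn R F := by
  classical
  rw [Ideal.span_le]
  rintro _ ⟨a, ha, rfl⟩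
  simpa [idealOfVarsIn, mem_ideal_span_X_image, support_monomial] using hF a ha

theorem mem_span_monomial_of_forall_isVertexCover [CommSemiring R] [Fintype σ]
    (hsq : ∀ a ∈ S, ∀ i, a i ≤ 1) {f : MvPolynomial σ R}
    (hf : ∀ F, IsVertexCover S F → f ∈ idealOfVarsIn R F) :
    f ∈ Ideal.span ((monomial · (1 : R)) '' S) := by
  rw [mem_ideal_span_monomial_image]
  intro b hb
  by_contra! h
  have hcov : IsVertexCover S (Finset.univ.filter fun i => b i = 0) := fun a ha => by
    obtain ⟨i, hi⟩ : ∃ i, b i < a i := by simpa [Finsupp.le_def] using h a ha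
    have := hsq a ha i
    exact ⟨i, by simp only [Finset.mem_filter, Finset.mem_univ, true_and]; omega, by omega⟩
  obtain ⟨i, hi, hbi⟩ := mem_ideal_span_X_image.mp (hf _ hcov) b hb
  exact hbi (Finset.mem_filter.mp hi).2

variable [CommRing R] [IsDomain R] [Fintype σ] [DecidableEq σ]

theorem exists_minimal_isVertexCover_of_mem_associatedPrimes [IsNoetherianRing R]
    (hsq : ∀ a ∈ S, ∀ i, a i ≤ 1) {P : Ideal (MvPolynomial σ R)}
    (hP : P ∈ associatedPrimes (MvPolynomial σ R)
      (MvPolynomial σ R ⧸ Ideal.span ((monomial · (1 : R)) '' S))) :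
    ∃ F, Minimal (IsVertexCover S) F ∧ P = idealOfVarsIn R F := by
  classical
  obtain ⟨hPprime, x, hx⟩ := isAssociatedPrime_iff.mp hP
  obtain ⟨f, rfl⟩ := Ideal.Quotient.mk_surjective x
  have hPf : ∀ r, r ∈ P ↔ r * f ∈ Ideal.span ((monomial · (1 : R)) '' S) := fun r => by
    rw [hx, Submodule.mem_colon_singleton, Submodule.mem_bot, ← Ideal.Quotient.eq_zero_iff_mem]
    rfl
  set T := Finset.univ.filter fun F => IsVertexCover S F ∧ f ∉ idealOfVarsIn R F
  have hPT : P = T.inf (idealOfVarsIn R) := by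
    ext r
    simp only [Submodule.mem_finsetInf, T, Finset.mem_filter, Finset.mem_univ, true_and, hPf]
    refine ⟨fun hr F ⟨hF, hfF⟩ => ((isPrime_idealOfVarsIn F).mem_or_mem
      (span_monomial_le_idealOfVarsIn hF hr)).resolve_right hfF,
      fun hr => mem_span_monomial_of_forall_isVertexCover hsq fun F hF => ?_⟩
    by_cases hfF : f ∈ idealOfVarsIn R F
    · exact Ideal.mul_mem_left _ r hfF
    · exact Ideal.mul_mem_right f _ (hr F ⟨hF, hfF⟩)
  have hPle : ∀ {G}, G ∈ T → P ≤ idealOfVarsIn R G := fun hG => hPT ▸ Finset.inf_le hG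
  obtain ⟨F, hFT, hFP⟩ := hPprime.inf_le'.mp hPT.ge
  refine ⟨F, ⟨(Finset.mem_filter.mp hFT).2.1, fun G hG hGF => ?_⟩, (hPle hFT).antisymm hFP⟩
  have hfG : f ∉ idealOfVarsIn R G :=
    fun hfG => (Finset.mem_filter.mp hFT).2.2 (idealOfVarsIn_le_iff.mpr hGF hfG)
  exact idealOfVarsIn_le_iff.mp (hFP.trans (hPle (by simp [T, hG, hfG])))

theorem exists_mul_monomial_mem_pow (hsq : ∀ a ∈ S, ∀ i, a i ≤ 1) {F : Finset σ}
    (hF : Minimal (IsVertexCover S) F) {K : σ →₀ ℕ} {m : ℕ} (hK : m ≤ ∑ i ∈ F, K i) :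
    ∃ s ∉ idealOfVarsIn R F, s * monomial K 1 ∈ Ideal.span ((monomial · (1 : R)) '' S) ^ m := by
  set v : σ →₀ ℕ := ∑ j ∈ Fᶜ, Finsupp.single j 1
  have hv : ∀ j, v j = if j ∈ F then 0 else 1 := fun j => by
    simp [v, Finsupp.finsetSum_apply, Finsupp.single_apply]
  have hvF : monomial v (1 : R) ∉ idealOfVarsIn R F := by
    simp [idealOfVarsIn, mem_ideal_span_X_image, hv]
  have hXv : ∀ i ∈ F, X i * monomial v (1 : R) ∈ Ideal.span ((monomial · (1 : R)) '' S) := by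
    intro i hi
    obtain ⟨a, ha, haF⟩ : ∃ a ∈ S, ∀ j ∈ F.erase i, a j = 0 := by
      by_contra! h
      exact F.notMem_erase i (hF.2 h (F.erase_subset i) hi)
    rw [mul_comm, ← pow_one (X i), ← monomial_add_single, mem_ideal_span_monomial_image]
    intro b hb
    refine ⟨a, ha, Finset.mem_singleton.mp (support_monomial_subset hb) ▸ fun j => ?_⟩
    have := hsq a ha j
    rw [Finsupp.add_apply, hv, Finsupp.single_apply]
    by_cases hij : i = j
    · subst hij
      simp [hi, this]
    by_cases hj : j ∈ F
    · simp [haF j (Finset.mem_erase.mpr ⟨Ne.symm hij, hj⟩)]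
    · simpa [hj, hij] using this
  refine ⟨monomial v 1 ^ m, fun h => hvF ((isPrime_idealOfVarsIn F).mem_of_pow_mem m h), ?_⟩
  have hspan : Ideal.span {monomial v (1 : R)} * idealOfVarsIn R F ≤
      Ideal.span ((monomial · (1 : R)) '' S) := by
    rw [idealOfVarsIn, Ideal.span_mul_span', Ideal.span_le, Set.singleton_mul]
    rintro _ ⟨_, ⟨i, hi, rfl⟩, rfl⟩
    simpa [mul_comm] using hXv i hi
  refine Ideal.pow_right_mono hspan m ?_
  rw [mul_pow]
  exact Ideal.mul_mem_mul (Ideal.pow_mem_pow (Ideal.mem_span_singleton_self _) m)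
    (monomial_mem_idealOfVarsIn_pow hK 1)

variable [IsNoetherianRing R]

theorem monomial_mem_symbolicPower (hsq : ∀ a ∈ S, ∀ i, a i ≤ 1) {K : σ →₀ ℕ} {m : ℕ}
    (hK : ∀ F ∈ associatedFaces R (Ideal.span ((monomial · (1 : R)) '' S)), m ≤ ∑ i ∈ F, K i) :
    monomial K 1 ∈ symbolicPower (Ideal.span ((monomial · (1 : R)) '' S)) m := by
  refine mem_symbolicPower_iff.mpr fun P hP => ?_
  obtain ⟨F, hF, rfl⟩ := exists_minimal_isVertexCover_of_mem_associatedPrimes hsq hP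
  exact exists_mul_monomial_mem_pow hsq hF (hK F hP)

theorem monomial_mem_idealOfVars_pow_mul_symbolicPower_pow (hsq : ∀ a ∈ S, ∀ i, a i ≤ 1)
    {t m e q : ℕ} (ht : 0 < t) {b : σ →₀ ℕ}
    (hne : (associatedFaces R (Ideal.span ((monomial · (1 : R)) '' S))).Nonempty)
    (hcard : ∀ F ∈ associatedFaces R (Ideal.span ((monomial · (1 : R)) '' S)), F.card ≤ e)
    (hb : ∀ F ∈ associatedFaces R (Ideal.span ((monomial · (1 : R)) '' S)),
      t * m + (t - 1) * (e - 1) + q ≤ ∑ i ∈ F, b i) :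
    monomial b 1 ∈ idealOfVars σ R ^ ((t - 1) * (e - 1) + q) *
      symbolicPower (Ideal.span ((monomial · (1 : R)) '' S)) m ^ t := by
  obtain ⟨K, hKb, hK, F, hF, hKF⟩ := Finsupp.exists_nsmul_le_forall_le_sum ht hne hcard
    fun F hF => (Nat.le_add_right _ _).trans (hb F hF)
  have hsplit : monomial b (1 : R) = monomial (b - t • K) 1 * monomial K 1 ^ t := by
    rw [monomial_pow, one_pow, monomial_mul, one_mul, tsub_add_cancel_of_le hKb]
  rw [hsplit]
  refine Ideal.mul_mem_mul ?_ (Ideal.pow_mem_pow (monomial_mem_symbolicPower hsq hK) t)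
  refine (monomial_mem_pow_idealOfVars_iff _ _ one_ne_zero).mpr ?_
  calc (t - 1) * (e - 1) + q ≤ ∑ i ∈ F, b i - t * ∑ i ∈ F, K i := by
        have := hb F hF
        have := Nat.mul_le_mul_left t hKF
        omega
    _ ≤ (b - t • K).degree := Finsupp.sum_sub_mul_sum_le_degree hKb F

end Squarefree

end MvPolynomial

theorem squarefree_symbolic_containment_general {k : Type*} [Field k] {n : ℕ}
    (I : Ideal (MvPolynomial (Fin (n + 1)) k)) (hsf : IsSquarefreeMonomialIdeal I)
    (e : ℕ) (he : IsBigHeight I e) (m t r : ℕ) (ht : 1 ≤ t) (hr : 1 ≤ r) :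
    symbolicPower I (t * (m + e - 1) - e + r) ≤
      mId k n ^ ((t - 1) * (e - 1) + r - 1) * symbolicPower I m ^ t := by
  obtain ⟨S, hsq, rfl⟩ := hsf
  set 𝓕 := associatedFaces k (Ideal.span ((monomial · (1 : k)) '' S))
  have hcard : ∀ F ∈ 𝓕, F.card ≤ e := fun F hF => by
    exact_mod_cast (card_le_height_idealOfVarsIn F).trans (he.1 _ hF)
  obtain ⟨F₀, hF₀⟩ : 𝓕.Nonempty := by
    obtain ⟨P, hP, -⟩ := he.2
    obtain ⟨F, -, rfl⟩ := exists_minimal_isVertexCover_of_mem_associatedPrimes hsq hP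
    exact ⟨F, hP⟩
  intro f hf
  refine mem_of_forall_monomial_mem fun b hb => ?_
  have hbF : ∀ F ∈ 𝓕, _ ≤ ∑ i ∈ F, b i := fun F hF => le_sum_of_mem_symbolicPower hF hf b hb
  -- `b` has `F₀`-degree at least `r ≥ 1`, so `F₀ ≠ ∅` and `e ≥ |F₀| ≥ 1`
  have he1 : 1 ≤ e := (Finset.nonempty_of_sum_ne_zero (f := fun i => b i)
    (by have := hbF F₀ hF₀; omega)).card_pos.trans_le (hcard F₀ hF₀)
  have hexp : t * (m + e - 1) = t * m + (t - 1) * (e - 1) + (e - 1) := by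
    obtain ⟨t, rfl⟩ := Nat.exists_eq_add_of_le' ht
    obtain ⟨e, rfl⟩ := Nat.exists_eq_add_of_le' he1
    rw [show m + (e + 1) - 1 = m + e by omega, Nat.add_sub_cancel, Nat.add_sub_cancel]
    ring
  rw [Nat.add_sub_assoc hr]
  exact monomial_mem_idealOfVars_pow_mul_symbolicPower_pow hsq ht ⟨F₀, hF₀⟩ hcard
    fun F hF => by have := hbF F hF; omega

theorem squarefree_symbolic_containment {k : Type*} [Field k] {n : ℕ}
    (I : Ideal (MvPolynomial (Fin (n + 1)) k)) (hsf : IsSquarefreeMonomialIdeal I)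
    (e : ℕ) (he : IsBigHeight I e) (m t r : ℕ) (hm : 1 ≤ m) (ht : 1 ≤ t) (hr : 1 ≤ r) :
    symbolicPower I (t * (m + e - 1) - e + r) ≤
      mId k n ^ ((t - 1) * (e - 1) + r - 1) * symbolicPower I m ^ t :=
  squarefree_symbolic_containment_general I hsf e he m t r ht hr
end
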